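/- Let V ∈ L^∞(ℝ;ℝ) with |V(x)| → 0 as |x| → ∞ and ‖V⁻‖_{L^∞} ≤ 1. With μ_j(β) the j-th most negative eigenvalue of K_β, N₋⁰ = {j : inf_{β>0} μ_j(β) < −1/2}, β_j ∈ (0,1] the unique solution of β_j = −(1/μ_j(β_j))·(2 + 1/μ_j(β_j)), and λ_j = 1 + 1/μ_j(β_j) for j ∈ N₋⁰, the sequence (λ_j)_{j ∈ N₋⁰} is non-increasing (λ_j ≥ λ_{j+1} whenever j, j+1 ∈ N₋⁰), and 0 < λ_j + 1 ≤ ‖V⁻‖_{L^∞} for every j ∈ N₋⁰. -/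

import Mathlib

open MeasureTheory Filter Set
open scoped ENNReal Topology BigOperators

noncomputable section

/-- `g` is the weak derivative of `f : ℝ → ℂ`. -/
def HasWeakDeriv (f g : ℝ → ℂ) : Prop :=
  ∀ χ : ℝ → ℂ, ContDiff ℝ (⊤ : ℕ∞) χ → HasCompactSupport χ →
    ∫ x : ℝ, f x * deriv χ x = - ∫ x : ℝ, g x * χ x

/-- `f ∈ H¹(ℝ;ℂ)` with weak derivative `f'`. -/
def MemH1 (f f' : ℝ → ℂ) : Prop :=
  MemLp f 2 (volume : Measure ℝ) ∧ MemLp f' 2 (volume : Measure ℝ) ∧ HasWeakDeriv f f'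

/-- The Rayleigh-type quotient `⟨Vu,u⟩_{L²} / (‖u'‖_{L²}² + β‖u‖_{L²}²)`. -/
def rayleigh (V : ℝ → ℝ) (β : ℝ) (u u' : ℝ → ℂ) : ℝ :=
  (∫ x : ℝ, V x * ‖u x‖ ^ 2) /
    ((eLpNorm u' 2 (volume : Measure ℝ)).toReal ^ 2 +
      β * (eLpNorm u 2 (volume : Measure ℝ)).toReal ^ 2)

/-- The set of values `sup_{u ∈ U \ {0}} ⟨Vu,u⟩/(‖u'‖² + β‖u‖²)` over all
`j`-dimensional subspaces `U ⊂ H¹(ℝ)` (encoded by `j` linearly independent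
functions in `H¹`). -/
def muSet (V : ℝ → ℝ) (β : ℝ) (j : ℕ) : Set ℝ :=
  { m | ∃ f f' : Fin j → ℝ → ℂ,
      (∀ i, MemH1 (f i) (f' i)) ∧
      (∀ c : Fin j → ℂ, (fun x => ∑ i, c i * f i x) =ᵐ[volume] (0 : ℝ → ℂ) → c = 0) ∧
      m = ⨆ c : {c : Fin j → ℂ // c ≠ 0},
            rayleigh V β (fun x => ∑ i, (c : Fin j → ℂ) i * f i x)
              (fun x => ∑ i, (c : Fin j → ℂ) i * f' i x) }

/-- The min-max value `μ_j(β)`. -/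
def muMinMax (V : ℝ → ℝ) (j : ℕ) (β : ℝ) : ℝ := sInf (muSet V β j)

/-! ### Auxiliary lemmas -/

lemma sq_eLpNorm_toReal {u : ℝ → ℂ} (hu : MemLp u 2 (volume : Measure ℝ)) :
    (eLpNorm u 2 (volume : Measure ℝ)).toReal ^ 2 = ∫ x, ‖u x‖ ^ 2 := by
  rw [hu.eLpNorm_eq_integral_rpow_norm (by norm_num) (by norm_num)]
  have h2 : ((2 : ℝ≥0∞)).toReal = ((2 : ℕ) : ℝ) := by norm_num
  simp_rw [h2, Real.rpow_natCast]
  have hnn : 0 ≤ ∫ x, ‖u x‖ ^ (2:ℕ) := integral_nonneg fun x => by positivity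
  rw [ENNReal.toReal_ofReal (by positivity)]
  rw [← Real.rpow_natCast ((∫ x, ‖u x‖ ^ (2:ℕ)) ^ (((2:ℕ):ℝ))⁻¹) 2, ← Real.rpow_mul hnn]
  norm_num

lemma integrable_sq {u : ℝ → ℂ} (hu : MemLp u 2 (volume : Measure ℝ)) :
    Integrable (fun x => ‖u x‖ ^ 2) (volume : Measure ℝ) := by
  have := hu.integrable_norm_rpow (by norm_num) (by norm_num)
  have h2 : ((2 : ℝ≥0∞)).toReal = ((2 : ℕ) : ℝ) := by norm_num
  simp_rw [h2, Real.rpow_natCast] at this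
  exact this

lemma ae_norm_le_toReal {W : ℝ → ℝ} (hfin : eLpNorm W ⊤ (volume : Measure ℝ) ≠ ⊤) :
    ∀ᵐ x : ℝ, ‖W x‖ ≤ (eLpNorm W ⊤ (volume : Measure ℝ)).toReal := by
  have h := ae_le_eLpNormEssSup (f := W) (μ := (volume : Measure ℝ))
  rw [eLpNorm_exponent_top] at hfin ⊢
  filter_upwards [h] with x hx
  have := ENNReal.toReal_mono hfin hx
  simpa using this

lemma rayleigh_lower {V : ℝ → ℝ} (hV : MemLp V ⊤ (volume : Measure ℝ))
    (hVfin : eLpNorm (fun x => max (-V x) 0) ⊤ (volume : Measure ℝ) ≠ ⊤)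
    {β : ℝ} (hβ : 0 < β) {u u' : ℝ → ℂ}
    (hu : MemLp u 2 (volume : Measure ℝ)) :
    -((eLpNorm (fun x => max (-V x) 0) ⊤ (volume : Measure ℝ)).toReal) / β
      ≤ rayleigh V β u u' := by
  set N : ℝ := (eLpNorm (fun x => max (-V x) 0) ⊤ (volume : Measure ℝ)).toReal with hN
  have hN0 : 0 ≤ N := ENNReal.toReal_nonneg
  have hVlow : ∀ᵐ x : ℝ, -N ≤ V x := by
    filter_upwards [ae_norm_le_toReal hVfin] with x hx
    have h1 : -V x ≤ max (-V x) 0 := le_max_left _ _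
    have h2 : max (-V x) 0 ≤ N := by
      rw [← hN] at hx
      calc max (-V x) 0 ≤ ‖max (-V x) 0‖ := le_abs_self _
        _ ≤ N := hx
    linarith
  have hInt1 : Integrable (fun x => ‖u x‖ ^ 2) (volume : Measure ℝ) := integrable_sq hu
  have hInt2 : Integrable (fun x => V x * ‖u x‖ ^ 2) (volume : Measure ℝ) :=
    hInt1.bdd_mul hV.aestronglyMeasurable (ae_norm_le_toReal hV.2.ne)
  have hnum : -N * ∫ x, ‖u x‖ ^ 2 ≤ ∫ x, V x * ‖u x‖ ^ 2 := by
    rw [← integral_const_mul]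
    refine integral_mono_ae (hInt1.const_mul _) hInt2 ?_
    filter_upwards [hVlow] with x hx
    exact mul_le_mul_of_nonneg_right hx (by positivity)
  set num : ℝ := ∫ x, V x * ‖u x‖ ^ 2 with hnumdef
  set A : ℝ := (eLpNorm u' 2 (volume : Measure ℝ)).toReal ^ 2 with hAdef
  set B : ℝ := (eLpNorm u 2 (volume : Measure ℝ)).toReal ^ 2 with hBdef
  have hA0 : 0 ≤ A := sq_nonneg _
  have hB0 : 0 ≤ B := sq_nonneg _
  have hBeq : B = ∫ x, ‖u x‖ ^ 2 := sq_eLpNorm_toReal hu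
  rw [← hBeq] at hnum
  show -N / β ≤ num / (A + β * B)
  rcases eq_or_lt_of_le (show (0:ℝ) ≤ A + β * B by positivity) with hD | hD
  · rw [← hD, div_zero]
    exact div_nonpos_of_nonpos_of_nonneg (by linarith) hβ.le
  · rw [div_le_div_iff₀ hβ hD]
    nlinarith [mul_le_mul_of_nonneg_right hnum hβ.le, mul_nonneg hN0 hA0]

lemma memLp_comb {j : ℕ} {f : Fin j → ℝ → ℂ}
    (hf : ∀ i, MemLp (f i) 2 (volume : Measure ℝ)) (c : Fin j → ℂ) :
    MemLp (fun x => ∑ i, c i * f i x) 2 (volume : Measure ℝ) :=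
  memLp_finset_sum Finset.univ (fun i _ => (hf i).const_mul (c i))

lemma rayleigh_min_le {V : ℝ → ℝ} {b b' : ℝ} (hb : 0 < b) (hbb : b ≤ b')
    (u u' : ℝ → ℂ) :
    min (rayleigh V b u u') 0 ≤ rayleigh V b' u u' := by
  unfold rayleigh
  set num : ℝ := ∫ x, V x * ‖u x‖ ^ 2
  set A : ℝ := (eLpNorm u' 2 (volume : Measure ℝ)).toReal ^ 2
  set B : ℝ := (eLpNorm u 2 (volume : Measure ℝ)).toReal ^ 2
  have hA0 : 0 ≤ A := sq_nonneg _
  have hB0 : 0 ≤ B := sq_nonneg _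
  rcases le_or_gt 0 num with h | h
  · exact le_trans (min_le_right _ _)
      (div_nonneg h (add_nonneg hA0 (mul_nonneg (lt_of_lt_of_le hb hbb).le hB0)))
  · refine le_trans (min_le_left _ _) ?_
    rcases eq_or_lt_of_le (show (0:ℝ) ≤ A + b * B by positivity) with hD | hD
    · have hAB : A = 0 ∧ B = 0 := ⟨by nlinarith, by nlinarith⟩
      simp [hAB.1, hAB.2]
    · have hD' : 0 < A + b' * B := by nlinarith
      rw [div_le_div_iff₀ hD hD']
      nlinarith [mul_nonneg (sub_nonneg.mpr hbb) hB0]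

lemma muSet_lower {V : ℝ → ℝ} (hV : MemLp V ⊤ (volume : Measure ℝ))
    (hVfin : eLpNorm (fun x => max (-V x) 0) ⊤ (volume : Measure ℝ) ≠ ⊤)
    {β : ℝ} (hβ : 0 < β) {j : ℕ} {m : ℝ} (hm : m ∈ muSet V β j) :
    -((eLpNorm (fun x => max (-V x) 0) ⊤ (volume : Measure ℝ)).toReal) / β ≤ m := by
  obtain ⟨f, f', hH1, -, rfl⟩ := hm
  have hle0 : -((eLpNorm (fun x => max (-V x) 0) ⊤ (volume : Measure ℝ)).toReal) / β ≤ 0 :=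
    div_nonpos_of_nonpos_of_nonneg (neg_nonpos.mpr ENNReal.toReal_nonneg) hβ.le
  rcases isEmpty_or_nonempty {c : Fin j → ℂ // c ≠ 0} with hI | hI
  · rw [Real.iSup_of_isEmpty]; exact hle0
  · by_cases hbdd : BddAbove (Set.range fun c : {c : Fin j → ℂ // c ≠ 0} =>
      rayleigh V β (fun x => ∑ i, (c : Fin j → ℂ) i * f i x)
        (fun x => ∑ i, (c : Fin j → ℂ) i * f' i x))
    · obtain ⟨c⟩ := hI
      exact le_trans (rayleigh_lower hV hVfin hβ (memLp_comb (fun i => (hH1 i).1) c))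
        (le_ciSup hbdd c)
    · rw [Real.iSup_of_not_bddAbove hbdd]; exact hle0

lemma muMinMax_lower {V : ℝ → ℝ} (hV : MemLp V ⊤ (volume : Measure ℝ))
    (hVfin : eLpNorm (fun x => max (-V x) 0) ⊤ (volume : Measure ℝ) ≠ ⊤)
    {β : ℝ} (hβ : 0 < β) (j : ℕ) :
    -((eLpNorm (fun x => max (-V x) 0) ⊤ (volume : Measure ℝ)).toReal) / β
      ≤ muMinMax V j β := by
  rcases Set.eq_empty_or_nonempty (muSet V β j) with he | hne
  · rw [muMinMax, he, Real.sInf_empty]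
    exact div_nonpos_of_nonpos_of_nonneg (neg_nonpos.mpr ENNReal.toReal_nonneg) hβ.le
  · exact le_csInf hne fun m hm => muSet_lower hV hVfin hβ hm

lemma muSet_bddBelow {V : ℝ → ℝ} (hV : MemLp V ⊤ (volume : Measure ℝ))
    (hVfin : eLpNorm (fun x => max (-V x) 0) ⊤ (volume : Measure ℝ) ≠ ⊤)
    {β : ℝ} (hβ : 0 < β) (j : ℕ) : BddBelow (muSet V β j) :=
  ⟨_, fun _ hm => muSet_lower hV hVfin hβ hm⟩

lemma muMinMax_zero (V : ℝ → ℝ) (β : ℝ) : muMinMax V 0 β = 0 := by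
  have hsub : ∀ c : Fin 0 → ℂ, c = 0 := fun c => funext fun i => i.elim0
  haveI hem : IsEmpty {c : Fin 0 → ℂ // c ≠ 0} := ⟨fun c => c.2 (hsub c.1)⟩
  have hset : muSet V β 0 = {0} := by
    ext m
    constructor
    · rintro ⟨f, f', -, -, rfl⟩
      simp [Real.iSup_of_isEmpty]
    · rintro rfl
      exact ⟨fun _ _ => 0, fun _ _ => 0, fun i => i.elim0, fun c _ => hsub c,
        (Real.iSup_of_isEmpty _).symm⟩
  rw [muMinMax, hset, csInf_singleton]

lemma muNeg {μ b : ℝ} (hb : 0 < b) (heq : b = -(1/μ) * (2 + 1/μ)) : μ < 0 := by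
  rcases lt_trichotomy μ 0 with h | h | h
  · exact h
  · exfalso; rw [h] at heq; simp at heq; linarith
  · exfalso
    have h1 : 0 < 1/μ := by positivity
    nlinarith

lemma lambda_bound {V : ℝ → ℝ} (hV : MemLp V ⊤ (volume : Measure ℝ))
    (hVneg : eLpNorm (fun x => max (-V x) 0) ⊤ (volume : Measure ℝ) ≤ 1)
    {j : ℕ} {b : ℝ} (hbI : b ∈ Set.Ioc (0:ℝ) 1)
    (heq : b = -(1 / muMinMax V j b) * (2 + 1 / muMinMax V j b)) :
    0 < (1 + 1 / muMinMax V j b) + 1 ∧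
      (1 + 1 / muMinMax V j b) + 1
        ≤ (eLpNorm (fun x => max (-V x) 0) ⊤ (volume : Measure ℝ)).toReal := by
  set N : ℝ := (eLpNorm (fun x => max (-V x) 0) ⊤ (volume : Measure ℝ)).toReal with hNdef
  set μ : ℝ := muMinMax V j b with hμdef
  have hVfin : eLpNorm (fun x => max (-V x) 0) ⊤ (volume : Measure ℝ) ≠ ⊤ :=
    (lt_of_le_of_lt hVneg ENNReal.one_lt_top).ne
  have hμneg : μ < 0 := muNeg hbI.1 heq
  have hlow : -N / b ≤ μ := muMinMax_lower hV hVfin hbI.1 j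
  have hN0 : 0 ≤ N := ENNReal.toReal_nonneg
  have htneg : 1/μ < 0 := one_div_neg.mpr hμneg
  have ht : (1/μ) * μ = 1 := one_div_mul_cancel hμneg.ne
  have hgoal1 : 0 < (1 + 1/μ) + 1 := by nlinarith [hbI.1, htneg]
  refine ⟨hgoal1, ?_⟩
  have hbμ : -N ≤ μ * b := by
    rw [div_le_iff₀ hbI.1] at hlow; linarith
  have h1 : μ * b * (1/μ) ≤ -N * (1/μ) := mul_le_mul_of_nonpos_right hbμ htneg.le
  have hid : μ * b * (1/μ) = b := by
    rw [show μ * b * (1/μ) = b * ((1/μ) * μ) by ring, ht, mul_one]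
  have h2 : b ≤ -N * (1/μ) := by rw [hid] at h1; exact h1
  have h3 : (-(1/μ)) * ((1 + 1/μ) + 1) ≤ (-(1/μ)) * N := by nlinarith [h2]
  exact (mul_le_mul_iff_right₀ (neg_pos.mpr htneg)).mp h3

set_option maxHeartbeats 2000000 in
/-- Monotonicity and bound on the eigenvalues `λ_j = 1 + 1/μ_j(β_j)`:
the sequence `(λ_j)_{j ∈ N₋⁰}` is non-increasing, and
`0 < λ_j + 1 ≤ ‖V⁻‖_{L^∞}` for every `j ∈ N₋⁰`. -/
theorem lambdaj_monotone_and_bounded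
    (V : ℝ → ℝ) (hV : MemLp V ⊤ (volume : Measure ℝ))
    (hV0 : Tendsto V (cocompact ℝ) (nhds 0))
    (hVneg : eLpNorm (fun x => max (-V x) 0) ⊤ (volume : Measure ℝ) ≤ 1) :
    (∀ (j : ℕ) (b b' : ℝ),
      (∃ β : ℝ, 0 < β ∧ muMinMax V j β < -(1/2)) →
      (∃ β : ℝ, 0 < β ∧ muMinMax V (j + 1) β < -(1/2)) →
      b ∈ Set.Ioc (0 : ℝ) 1 →
      b = -(1 / muMinMax V j b) * (2 + 1 / muMinMax V j b) →
      b' ∈ Set.Ioc (0 : ℝ) 1 →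
      b' = -(1 / muMinMax V (j + 1) b') * (2 + 1 / muMinMax V (j + 1) b') →
      1 + 1 / muMinMax V (j + 1) b' ≤ 1 + 1 / muMinMax V j b) ∧
    (∀ (j : ℕ) (b : ℝ),
      (∃ β : ℝ, 0 < β ∧ muMinMax V j β < -(1/2)) →
      b ∈ Set.Ioc (0 : ℝ) 1 →
      b = -(1 / muMinMax V j b) * (2 + 1 / muMinMax V j b) →
      0 < (1 + 1 / muMinMax V j b) + 1 ∧
        (1 + 1 / muMinMax V j b) + 1
          ≤ (eLpNorm (fun x => max (-V x) 0) ⊤ (volume : Measure ℝ)).toReal) := by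
  have hVfin : eLpNorm (fun x => max (-V x) 0) ⊤ (volume : Measure ℝ) ≠ ⊤ :=
    (lt_of_le_of_lt hVneg ENNReal.one_lt_top).ne
  have hN1 : (eLpNorm (fun x => max (-V x) 0) ⊤ (volume : Measure ℝ)).toReal ≤ 1 := by
    have := ENNReal.toReal_mono (by norm_num : (1 : ℝ≥0∞) ≠ ⊤) hVneg
    simpa using this
  constructor
  · intro j b b' hex hex' hbI heq hbI' heq'
    set s : ℝ := muMinMax V j b with hsdef
    set μ' : ℝ := muMinMax V (j+1) b' with hμ'def
    obtain ⟨hLpos, hLle⟩ := lambda_bound hV hVneg hbI heq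
    obtain ⟨hLppos, hLple⟩ := lambda_bound hV hVneg hbI' heq'
    have hsneg : s < 0 := muNeg hbI.1 heq
    have hμ'neg : μ' < 0 := muNeg hbI'.1 heq'
    by_contra hcon
    push_neg at hcon
    -- λ < λ', both ≤ 0, λ > -1
    have hLp0 : 1 + 1/μ' ≤ 0 := by linarith
    have hblt : b < b' := by
      have hb2 : b = 1 - (1 + 1/s)^2 := by rw [heq]; ring
      have hb'2 : b' = 1 - (1 + 1/μ')^2 := by rw [heq']; ring
      nlinarith [hcon, hLpos, hLp0]
    have hμ's : μ' < s := by
      have h1 : 1/s < 1/μ' := by linarith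
      have e1 : (1/μ') * μ' = 1 := one_div_mul_cancel hμ'neg.ne
      have e2 : (1/s) * s = 1 := one_div_mul_cancel hsneg.ne
      have hId : (1/μ' - 1/s) * (s * μ') = s - μ' := by
        have h' : (1/μ' - 1/s) * (s * μ') = s*((1/μ')*μ') - μ'*((1/s)*s) := by ring
        rw [h', e1, e2]; ring
      have hpos : 0 < (1/μ' - 1/s) * (s * μ') :=
        mul_pos (sub_pos.mpr h1) (mul_pos_of_neg_of_neg hsneg hμ'neg)
      rw [hId] at hpos
      linarith
    -- now show s ≤ μ', contradiction
    have hjpos : 0 < j := by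
      rcases hex with ⟨β, hβ, hlt⟩
      rcases Nat.eq_zero_or_pos j with rfl | h
      · rw [muMinMax_zero] at hlt; norm_num at hlt
      · exact h
    have hkey : ∀ m' ∈ muSet V b' (j+1), s ≤ m' := by
      rintro m' ⟨f, f', hH1, hlin, rfl⟩
      set F' : {c : Fin (j+1) → ℂ // c ≠ 0} → ℝ := fun c =>
        rayleigh V b' (fun x => ∑ i, (c : Fin (j+1) → ℂ) i * f i x)
          (fun x => ∑ i, (c : Fin (j+1) → ℂ) i * f' i x) with hF'def
      rcases le_or_gt 0 (⨆ c, F' c) with h0 | hneg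
      · exact le_trans hsneg.le h0
      · have hbdd : BddAbove (Set.range F') := by
          by_contra hnb
          rw [Real.iSup_of_not_bddAbove hnb] at hneg
          exact lt_irrefl _ hneg
        set g : Fin j → ℝ → ℂ := fun i => f i.castSucc with hgdef
        set g' : Fin j → ℝ → ℂ := fun i => f' i.castSucc with hg'def
        have hling : ∀ c : Fin j → ℂ,
            (fun x => ∑ i, c i * g i x) =ᵐ[volume] (0 : ℝ → ℂ) → c = 0 := by
          intro c hc
          have hc' : (fun x => ∑ i, (Fin.snoc c 0 : Fin (j+1) → ℂ) i * f i x)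
              =ᵐ[volume] (0 : ℝ → ℂ) := by
            have hfe : (fun x => ∑ i, (Fin.snoc c 0 : Fin (j+1) → ℂ) i * f i x)
                = (fun x => ∑ i, c i * g i x) := by
              funext x
              rw [Fin.sum_univ_castSucc]
              simp [hgdef, Fin.snoc_castSucc, Fin.snoc_last]
            rw [hfe]; exact hc
          have := hlin _ hc'
          funext i
          have h0 := congrFun this i.castSucc
          simpa using h0
        have hmem : (⨆ c : {c : Fin j → ℂ // c ≠ 0},
            rayleigh V b (fun x => ∑ i, (c : Fin j → ℂ) i * g i x)
              (fun x => ∑ i, (c : Fin j → ℂ) i * g' i x)) ∈ muSet V b j :=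
          ⟨g, g', fun i => hH1 i.castSucc, hling, rfl⟩
        refine le_trans (csInf_le (muSet_bddBelow hV hVfin hbI.1 j) hmem) ?_
        haveI : Nonempty {c : Fin j → ℂ // c ≠ 0} := by
          refine ⟨⟨fun _ => 1, ?_⟩⟩
          intro hzero
          have := congrFun hzero ⟨0, hjpos⟩
          simp at this
        refine ciSup_le fun c => ?_
        have hsnoc_ne : (Fin.snoc (c : Fin j → ℂ) 0 : Fin (j+1) → ℂ) ≠ 0 := by
          intro hzero
          apply c.2
          funext i
          have := congrFun hzero i.castSucc
          simpa using this
        have hueq : (fun x => ∑ i, (Fin.snoc (c : Fin j → ℂ) 0 : Fin (j+1) → ℂ) i * f i x)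
            = (fun x => ∑ i, (c : Fin j → ℂ) i * g i x) := by
          funext x
          rw [Fin.sum_univ_castSucc]
          simp [hgdef, Fin.snoc_castSucc, Fin.snoc_last]
        have hueq' : (fun x => ∑ i, (Fin.snoc (c : Fin j → ℂ) 0 : Fin (j+1) → ℂ) i * f' i x)
            = (fun x => ∑ i, (c : Fin j → ℂ) i * g' i x) := by
          funext x
          rw [Fin.sum_univ_castSucc]
          simp [hg'def, Fin.snoc_castSucc, Fin.snoc_last]
        have h1 : rayleigh V b'
            (fun x => ∑ i, (Fin.snoc (c : Fin j → ℂ) 0 : Fin (j+1) → ℂ) i * f i x)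
            (fun x => ∑ i, (Fin.snoc (c : Fin j → ℂ) 0 : Fin (j+1) → ℂ) i * f' i x)
            ≤ ⨆ c, F' c := le_ciSup hbdd ⟨_, hsnoc_ne⟩
        rw [hueq, hueq'] at h1
        have h3 := rayleigh_min_le (V := V) hbI.1 hblt.le
          (fun x => ∑ i, (c : Fin j → ℂ) i * g i x)
          (fun x => ∑ i, (c : Fin j → ℂ) i * g' i x)
        rcases le_or_gt (rayleigh V b (fun x => ∑ i, (c : Fin j → ℂ) i * g i x)
            (fun x => ∑ i, (c : Fin j → ℂ) i * g' i x)) 0 with hle | hgt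
        · have : min (rayleigh V b (fun x => ∑ i, (c : Fin j → ℂ) i * g i x)
              (fun x => ∑ i, (c : Fin j → ℂ) i * g' i x)) 0
              = rayleigh V b (fun x => ∑ i, (c : Fin j → ℂ) i * g i x)
                (fun x => ∑ i, (c : Fin j → ℂ) i * g' i x) := min_eq_left hle
          rw [this] at h3
          linarith
        · exfalso
          have hmin : min (rayleigh V b (fun x => ∑ i, (c : Fin j → ℂ) i * g i x)
              (fun x => ∑ i, (c : Fin j → ℂ) i * g' i x)) 0 = 0 := min_eq_right hgt.le
          rw [hmin] at h3
          linarith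
    have hsle : s ≤ μ' := by
      rcases Set.eq_empty_or_nonempty (muSet V b' (j+1)) with he | hne
      · rw [hμ'def, muMinMax, he, Real.sInf_empty]
        exact hsneg.le
      · exact le_csInf hne hkey
    linarith
  · intro j b hex hbI heq
    exact lambda_bound hV hVneg hbI heq
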